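/- arXiv:2309.05906 — 2 statements merged into one kernel-verified Lean document; each statement's English description precedes it below -/
import Mathlib

section
/- Let φ be a continuous flow with φ(x,0) = x and the semigroup property φ(φ(x,s), t) = φ(x, s+t) for s,t ≥ 0. Let S ⊆ ℝⁿ and define trans*(S) = {x ∈ ∂S | ∀ε>0 ∃t∈[0,ε), φ(x,t)∉S} and RA*(S → trans*(S)) as the reach-avoid set with target trans*(S). Then C := S \ RA*(S → trans*(S)) is a differential invariant of the flow with respect to S, i.e., for all x ∈ C and all T ≥ 0: if φ(x,t) ∈ S for all t ∈ [0,T], then φ(x,t) ∈ C for all t ∈ [0,T]. -/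
/-- Theorem 3 of the paper: C = S \ RA*(S → trans*(S)) is a
differential invariant of the flow w.r.t. S. -/
theorem stmt_3 {n : ℕ} (φ : EuclideanSpace ℝ (Fin n) → ℝ → EuclideanSpace ℝ (Fin n))
    (hcont : ∀ x, Continuous (φ x)) (hinit : ∀ x, φ x 0 = x)
    (hsemi : ∀ x s t, 0 ≤ s → 0 ≤ t → φ (φ x s) t = φ x (s + t))
    (S : Set (EuclideanSpace ℝ (Fin n)))
    (transS : Set (EuclideanSpace ℝ (Fin n)))
    (htrans : transS = {y ∈ frontier S |
        ∀ ε > (0:ℝ), ∃ t, 0 ≤ t ∧ t < ε ∧ φ y t ∉ S})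
    (C : Set (EuclideanSpace ℝ (Fin n)))
    (hC : C = S \ {x ∈ S | ∃ T : ℝ, 0 ≤ T ∧
        (∀ t, 0 ≤ t → t < T → φ x t ∈ S) ∧
        (∀ ε > (0:ℝ), ∃ t, T ≤ t ∧ t < T + ε ∧ φ x t ∈ transS)}) :
    ∀ x ∈ C, ∀ T : ℝ, 0 ≤ T →
      (∀ t, 0 ≤ t → t ≤ T → φ x t ∈ S) →
      (∀ t, 0 ≤ t → t ≤ T → φ x t ∈ C) := by

  subst hC
  intro x hx T hT hS t ht htT
  have hxS := hx.1
  have hxNRA := hx.2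
  refine ⟨hS t ht htT, fun hmem => ?_⟩
  obtain ⟨_, T', hT', hstay, hε⟩ := hmem
  apply hxNRA
  refine ⟨hxS, t + T', by linarith, ?_, ?_⟩
  · intro s hs hsL
    rcases le_or_gt s t with h | h
    · exact hS s hs (le_trans h htT)
    · have h1 : 0 ≤ s - t := by linarith
      have := hsemi x t (s - t) ht h1
      rw [add_sub_cancel] at this
      rw [← this]
      exact hstay (s - t) h1 (by linarith)
  · intro ε hε'
    obtain ⟨s, hs1, hs2, hs3⟩ := hε ε hε'
    refine ⟨t + s, by linarith, by linarith, ?_⟩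
    rw [← hsemi x t s ht (le_trans hT' hs1)]
    exact hs3
end

section
/- Let f : ℝⁿ → ℝⁿ be continuous and let S ⊆ ℝⁿ be bounded, TR = {x | ∀k ∈ {1,…,K}, γ_k(x) < 0} with each γ_k continuous. Suppose θ, ψ : ℝⁿ → ℝ are continuously differentiable and satisfy: (1) ⟨∇θ(x), f(x)⟩ ≤ 0 for all x ∈ S \ TR; (2) θ(x) ≥ max_k γ_k(x) + ⟨∇ψ(x), f(x)⟩ for all x ∈ S \ TR; (3) θ(x) ≥ 0 for all x ∈ ∂S. Let x₀ ∈ S with θ(x₀) < 0, and let φ(x₀, ·) be the solution of ẋ = f(x) from x₀, assumed to exist for all t ≥ 0. Then there exists T ≥ 0 such that φ(x₀, T) ∈ TR and φ(x₀, t) ∈ S for all t ∈ [0, T]. -/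
/-!
Before reaching `TR`, condition (1) makes `θ` nonincreasing along the trajectory, so `θ` stays
below `θ(x₀) < 0` and condition (3) forbids reaching `∂S`: the trajectory stays in the interior
of `S` until it hits `TR`. If it never hit `TR`, then some `γ_k ≥ 0` at every time and condition
(2) would give `d/dt ψ(φ t) ≤ θ(φ t) ≤ θ(x₀) < 0`, so `ψ ∘ φ` would tend to `-∞`, which is
impossible since `ψ` is bounded on the bounded set `S`. The reaching time is then taken just
after the first hitting time, where the trajectory is still in the open set `interior S`.
-/

open Set Filter Topology

theorem exists_mem_frontier_of_exists_notMem {X : Type*} [TopologicalSpace X] {φ : ℝ → X}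
    (hφ : Continuous φ) {U : Set X} (hU : IsOpen U) (h0 : φ 0 ∈ U) {b : ℝ}
    (hexit : ∃ t ∈ Icc 0 b, φ t ∉ U) :
    ∃ c ∈ Ioc 0 b, φ c ∈ frontier U ∧ ∀ s ∈ Ico 0 c, φ s ∈ U := by
  set C := Icc 0 b ∩ φ ⁻¹' Uᶜ
  have hCb : BddBelow C := ⟨0, fun t ht => ht.1.1⟩
  have hc : sInf C ∈ C :=
    (isClosed_Icc.inter (hU.isClosed_compl.preimage hφ)).csInf_mem hexit hCb
  have hc0 : 0 < sInf C := hc.1.1.lt_of_ne fun h => hc.2 (h ▸ h0)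
  have hbefore : ∀ s ∈ Ico 0 (sInf C), φ s ∈ U := fun s hs => by
    by_contra h
    exact notMem_of_lt_csInf hs.2 hCb ⟨⟨hs.1, hs.2.le.trans hc.1.2⟩, h⟩
  refine ⟨sInf C, ⟨hc0, hc.1.2⟩, ?_, hbefore⟩
  rw [hU.frontier_eq]
  have hlim : Tendsto φ (𝓝[<] sInf C) (𝓝 (φ (sInf C))) :=
    (hφ.tendsto _).mono_left nhdsWithin_le_nhds
  refine ⟨mem_closure_of_tendsto hlim ?_, hc.2⟩
  filter_upwards [Ioo_mem_nhdsLT hc0] with s hs using hbefore s ⟨hs.1.le, hs.2⟩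

theorem exists_mem_Icc_subset_of_Icc_csInf_subset {A U : Set ℝ} {a : ℝ} (hA : A.Nonempty)
    (haA : ∀ t ∈ A, a ≤ t) (hU : IsOpen U) (h : Icc a (sInf A) ⊆ U) :
    ∃ T ∈ A, Icc a T ⊆ U := by
  have haτ : a ≤ sInf A := le_csInf hA haA
  obtain ⟨ε, hε, hball⟩ := Metric.isOpen_iff.mp hU _ (h ⟨haτ, le_rfl⟩)
  obtain ⟨T, hTA, hTε⟩ := Real.lt_sInf_add_pos hA hε
  refine ⟨T, hTA, fun t ht => ?_⟩
  rcases le_or_gt t (sInf A) with htτ | hτt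
  · exact h ⟨ht.1, htτ⟩
  · exact hball (Real.ball_eq_Ioo (sInf A) ε ▸ ⟨by linarith, by linarith [ht.2]⟩)

section Trajectory

variable {E : Type*} [NormedAddCommGroup E] [NormedSpace ℝ E] {f : E → E} {φ : ℝ → E}

theorem sub_le_mul_of_fderiv_le_along (hφ : ∀ t, HasDerivAt φ (f (φ t)) t) {V : E → ℝ}
    (hV : Differentiable ℝ V) {a c : ℝ} (hc : 0 ≤ c)
    (hle : ∀ s ∈ Ico 0 c, fderiv ℝ V (φ s) (f (φ s)) ≤ a) :
    V (φ c) - V (φ 0) ≤ a * c := by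
  have hderiv : ∀ t, HasDerivAt (fun s => V (φ s)) (fderiv ℝ V (φ t) (f (φ t))) t :=
    fun t => (hV (φ t)).hasFDerivAt.comp_hasDerivAt t (hφ t)
  have hdiff : Differentiable ℝ (fun s => V (φ s)) := fun t => (hderiv t).differentiableAt
  have hle' : ∀ s ∈ interior (Icc 0 c), deriv (fun s => V (φ s)) s ≤ a := fun s hs => by
    rw [interior_Icc] at hs
    exact (hderiv s).deriv ▸ hle s (Ioo_subset_Ico_self hs)
  simpa using (convex_Icc 0 c).image_sub_le_mul_sub_of_deriv_le hdiff.continuous.continuousOn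
    hdiff.differentiableOn hle' 0 ⟨le_rfl, hc⟩ c ⟨hc, le_rfl⟩ hc

variable {S TR : Set E} {θ : E → ℝ}

theorem mem_interior_along_of_forall_notMem (hφ : ∀ t, HasDerivAt φ (f (φ t)) t)
    (hθ : Differentiable ℝ θ) (h1 : ∀ x ∈ S \ TR, fderiv ℝ θ x (f x) ≤ 0)
    (h3 : ∀ x ∈ frontier S, 0 ≤ θ x) (hS0 : φ 0 ∈ S) (hθ0 : θ (φ 0) < 0) {b : ℝ}
    (havoid : ∀ t ∈ Ico 0 b, φ t ∉ TR) : ∀ t ∈ Icc 0 b, φ t ∈ interior S := by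
  have hφc : Continuous φ := continuous_iff_continuousAt.mpr fun t => (hφ t).continuousAt
  have hint0 : φ 0 ∈ interior S := by
    by_contra h
    exact (h3 _ ⟨subset_closure hS0, h⟩).not_gt hθ0
  by_contra! hexit
  obtain ⟨c, hc, hfr, hbefore⟩ :=
    exists_mem_frontier_of_exists_notMem hφc isOpen_interior hint0 hexit
  have hθc : θ (φ c) - θ (φ 0) ≤ 0 * c := sub_le_mul_of_fderiv_le_along hφ hθ hc.1.le
    fun s hs => h1 _ ⟨interior_subset (hbefore s hs), havoid s ⟨hs.1, hs.2.trans_le hc.2⟩⟩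
  linarith [h3 _ (frontier_interior_subset hfr)]

theorem exists_mem_along_of_fderiv_le [ProperSpace E] (hφ : ∀ t, HasDerivAt φ (f (φ t)) t)
    (hθ : Differentiable ℝ θ) (h1 : ∀ x ∈ S \ TR, fderiv ℝ θ x (f x) ≤ 0)
    (h3 : ∀ x ∈ frontier S, 0 ≤ θ x) (hS0 : φ 0 ∈ S) (hθ0 : θ (φ 0) < 0)
    (hSb : Bornology.IsBounded S) {ψ : E → ℝ} (hψ : Differentiable ℝ ψ)
    (h2 : ∀ x ∈ S \ TR, fderiv ℝ ψ x (f x) ≤ θ x) :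
    ∃ t, 0 ≤ t ∧ φ t ∈ TR := by
  by_contra! havoid
  have houtside : ∀ t, 0 ≤ t → φ t ∈ S \ TR := fun t ht =>
    ⟨interior_subset (mem_interior_along_of_forall_notMem hφ hθ h1 h3 hS0 hθ0
      (fun s hs => havoid s hs.1) t ⟨ht, le_rfl⟩), havoid t ht⟩
  have hθle : ∀ t, 0 ≤ t → θ (φ t) ≤ θ (φ 0) := fun t ht => by
    linarith [sub_le_mul_of_fderiv_le_along hφ hθ ht fun s hs => h1 _ (houtside s hs.1)]
  have hψle : ∀ t, 0 ≤ t → ψ (φ t) - ψ (φ 0) ≤ θ (φ 0) * t := fun t ht =>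
    sub_le_mul_of_fderiv_le_along hφ hψ ht fun s hs =>
      (h2 _ (houtside s hs.1)).trans (hθle s hs.1)
  obtain ⟨m, hm⟩ := hSb.isCompact_closure.bddBelow_image hψ.continuous.continuousOn
  have hmψ : ∀ x ∈ S, m ≤ ψ x := fun x hx => hm ⟨x, subset_closure hx, rfl⟩
  -- at this time the linear bound on `ψ ∘ φ` falls below `m`
  set t := (m - ψ (φ 0)) / θ (φ 0) + 1
  have ht : 0 ≤ t := by
    have : 0 ≤ (m - ψ (φ 0)) / θ (φ 0) :=
      div_nonneg_of_nonpos (by linarith [hmψ _ hS0]) hθ0.le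
    linarith
  have hθt : θ (φ 0) * t = m - ψ (φ 0) + θ (φ 0) := by
    rw [mul_add, mul_one, mul_div_cancel₀ _ hθ0.ne]
  linarith [hψle t ht, hmψ _ (houtside t ht).1]

end Trajectory

theorem stmt_6_general {n K : ℕ}
    (f : EuclideanSpace ℝ (Fin n) → EuclideanSpace ℝ (Fin n))
    (S : Set (EuclideanSpace ℝ (Fin n))) (hSb : Bornology.IsBounded S)
    (γ : Fin K → EuclideanSpace ℝ (Fin n) → ℝ)
    (TR : Set (EuclideanSpace ℝ (Fin n))) (hTR : TR = {x | ∀ k, γ k x < 0})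
    (θ ψ : EuclideanSpace ℝ (Fin n) → ℝ)
    (hθ : ContDiff ℝ 1 θ) (hψ : ContDiff ℝ 1 ψ)
    (h1 : ∀ x ∈ S \ TR, fderiv ℝ θ x (f x) ≤ 0)
    (h2 : ∀ x ∈ S \ TR, ∀ k, γ k x + fderiv ℝ ψ x (f x) ≤ θ x)
    (h3 : ∀ x ∈ frontier S, 0 ≤ θ x)
    (x₀ : EuclideanSpace ℝ (Fin n)) (hx₀ : x₀ ∈ S) (hθx₀ : θ x₀ < 0)
    (φ : ℝ → EuclideanSpace ℝ (Fin n)) (hφ0 : φ 0 = x₀)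
    (hφ : ∀ t : ℝ, HasDerivAt φ (f (φ t)) t) :
    ∃ T : ℝ, 0 ≤ T ∧ φ T ∈ TR ∧ ∀ t, 0 ≤ t → t ≤ T → φ t ∈ S := by
  subst hφ0
  have hθd := hθ.differentiable one_ne_zero
  have hψS : ∀ x ∈ S \ TR, fderiv ℝ ψ x (f x) ≤ θ x := fun x hx => by
    obtain ⟨k, hk⟩ : ∃ k, 0 ≤ γ k x := by simpa [hTR] using hx.2
    linarith [h2 x hx k]
  have hreach := exists_mem_along_of_fderiv_le hφ hθd h1 h3 hx₀ hθx₀ hSb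
    (hψ.differentiable one_ne_zero) hψS
  have hφc : Continuous φ := continuous_iff_continuousAt.mpr fun t => (hφ t).continuousAt
  set A := {t | 0 ≤ t ∧ φ t ∈ TR}
  have hAb : BddBelow A := ⟨0, fun t ht => ht.1⟩
  obtain ⟨T, ⟨hT0, hTR⟩, hTS⟩ := exists_mem_Icc_subset_of_Icc_csInf_subset hreach
    (fun t ht => ht.1) (isOpen_interior.preimage hφc)
    (mem_interior_along_of_forall_notMem hφ hθd h1 h3 hx₀ hθx₀
      fun t ht htTR => notMem_of_lt_csInf ht.2 hAb ⟨ht.1, htTR⟩)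
  exact ⟨T, hT0, hTR, fun t ht htT => interior_subset (hTS ⟨ht, htT⟩)⟩

/-- Theorem 6, inner-approximation guarantee: under the
certificate conditions (1)-(3) on θ and ψ, any initial state x₀ ∈ S with
θ(x₀) < 0 reaches TR while staying in S.  Condition (2), θ ≥ max_k γ_k + ⟨∇ψ,f⟩,
is expressed equivalently as the conjunction over all k. -/
theorem stmt_6 {n K : ℕ}
    (f : EuclideanSpace ℝ (Fin n) → EuclideanSpace ℝ (Fin n)) (hf : Continuous f)
    (S : Set (EuclideanSpace ℝ (Fin n))) (hSb : Bornology.IsBounded S)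
    (γ : Fin K → EuclideanSpace ℝ (Fin n) → ℝ) (hγ : ∀ k, Continuous (γ k))
    (TR : Set (EuclideanSpace ℝ (Fin n))) (hTR : TR = {x | ∀ k, γ k x < 0})
    (θ ψ : EuclideanSpace ℝ (Fin n) → ℝ)
    (hθ : ContDiff ℝ 1 θ) (hψ : ContDiff ℝ 1 ψ)
    (h1 : ∀ x ∈ S \ TR, fderiv ℝ θ x (f x) ≤ 0)
    (h2 : ∀ x ∈ S \ TR, ∀ k, γ k x + fderiv ℝ ψ x (f x) ≤ θ x)
    (h3 : ∀ x ∈ frontier S, 0 ≤ θ x)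
    (x₀ : EuclideanSpace ℝ (Fin n)) (hx₀ : x₀ ∈ S) (hθx₀ : θ x₀ < 0)
    (φ : ℝ → EuclideanSpace ℝ (Fin n)) (hφ0 : φ 0 = x₀)
    (hφ : ∀ t : ℝ, HasDerivAt φ (f (φ t)) t) :
    ∃ T : ℝ, 0 ≤ T ∧ φ T ∈ TR ∧ ∀ t, 0 ≤ t → t ≤ T → φ t ∈ S :=
  stmt_6_general f S hSb γ TR hTR θ ψ hθ hψ h1 h2 h3 x₀ hx₀ hθx₀ φ hφ0 hφ
end
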